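/- arXiv:2007.05485 — 4 statements merged into one kernel-verified Lean document; each statement's English description precedes it below -/
import Mathlib

section
/- Let θ* ∈ ℝ^n and suppose c_{ij} := cos(θ*_i − θ*_j) satisfies c_{ij} ≥ c₀ > 0 for all i,j. Define the matrix L by L_{ij} = (γ/n) c_{ij} for i ≠ j and L_{ii} = −(γ/n) Σ_{k≠i} c_{ik}, with γ > 0. Then for every x ∈ ℝ^n with Σ_i x_i = 0, one has γ·c₀·‖x‖² ≤ xᵀ(−L)x ≤ γ·‖x‖². -/
open Matrix Real

/-- Bounds on the quadratic form of the Kuramoto Jacobian: if all cosines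
`c_{ij} = cos(θ*_i − θ*_j)` are bounded below by `c₀ > 0`, then on the
mean-zero subspace `γ c₀ ‖x‖² ≤ xᵀ(−L)x ≤ γ ‖x‖²`. -/
theorem stmt_4 (n : ℕ) (hn : 1 ≤ n) (γ : ℝ) (hγ : 0 < γ)
    (θs : Fin n → ℝ) (c₀ : ℝ) (hc₀ : 0 < c₀)
    (hcos : ∀ i j : Fin n, c₀ ≤ Real.cos (θs i - θs j))
    (L : Matrix (Fin n) (Fin n) ℝ)
    (hL : L = Matrix.of (fun i j =>
      if i = j then -(γ / n) * ∑ k ∈ Finset.univ.erase i, Real.cos (θs i - θs k)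
      else (γ / n) * Real.cos (θs i - θs j)))
    (x : Fin n → ℝ) (hx : ∑ i, x i = 0) :
    γ * c₀ * (∑ i, (x i) ^ 2) ≤ x ⬝ᵥ ((-L) *ᵥ x) ∧
    x ⬝ᵥ ((-L) *ᵥ x) ≤ γ * (∑ i, (x i) ^ 2) := by
  set c : Fin n → Fin n → ℝ := fun i j => Real.cos (θs i - θs j) with hc
  have hnR : (0:ℝ) < (n:ℝ) := by exact_mod_cast Nat.lt_of_lt_of_le Nat.zero_lt_one hn
  have hcsymm : ∀ i j, c i j = c j i := by
    intro i j
    have := Real.cos_neg (θs i - θs j)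
    rw [neg_sub] at this
    exact this.symm
  set T : ℝ := ∑ i, ∑ j, c i j * (x i ^ 2 - x i * x j) with hT
  set S : ℝ := ∑ i, ∑ j, c i j * (x i - x j) ^ 2 with hS
  set SQ : ℝ := ∑ i, (x i) ^ 2 with hSQ
  -- Step A: expand the quadratic form
  have hA : x ⬝ᵥ ((-L) *ᵥ x) = ∑ i, ∑ j, x i * ((-L) i j * x j) := by
    simp [dotProduct, mulVec, Finset.mul_sum]
  -- Step B: inner sum computation
  have hinner : ∀ i, ∑ j, x i * ((-L) i j * x j)
      = (γ / n) * ∑ j, c i j * (x i ^ 2 - x i * x j) := by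
    intro i
    have hmi : i ∈ (Finset.univ : Finset (Fin n)) := Finset.mem_univ i
    have hdiag : (-L) i i = (γ / n) * ∑ k ∈ Finset.univ.erase i, c i k := by
      simp [hL, hc]
    have hoff : ∀ j ∈ Finset.univ.erase i, x i * ((-L) i j * x j)
        = (γ / n) * (c i j * (x i ^ 2 - x i * x j)) - c i j * ((γ / n) * x i ^ 2) := by
      intro j hj
      have hij : i ≠ j := (Finset.ne_of_mem_erase hj).symm
      simp only [hL, Matrix.neg_apply, Matrix.of_apply, if_neg hij]
      ring
    calc ∑ j, x i * ((-L) i j * x j)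
        = x i * ((-L) i i * x i) + ∑ j ∈ Finset.univ.erase i, x i * ((-L) i j * x j) :=
          (Finset.add_sum_erase _ _ hmi).symm
      _ = (∑ k ∈ Finset.univ.erase i, c i k) * ((γ / n) * x i ^ 2)
          + ∑ j ∈ Finset.univ.erase i,
            ((γ / n) * (c i j * (x i ^ 2 - x i * x j)) - c i j * ((γ / n) * x i ^ 2)) := by
          rw [hdiag, Finset.sum_congr rfl hoff]; ring
      _ = ∑ j ∈ Finset.univ.erase i, (γ / n) * (c i j * (x i ^ 2 - x i * x j)) := by
          rw [Finset.sum_mul, Finset.sum_sub_distrib]; ring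
      _ = ∑ j, (γ / n) * (c i j * (x i ^ 2 - x i * x j)) := by
          rw [← Finset.add_sum_erase _ _ hmi]; simp [pow_two]
      _ = (γ / n) * ∑ j, c i j * (x i ^ 2 - x i * x j) := by rw [Finset.mul_sum]
  have hQ : x ⬝ᵥ ((-L) *ᵥ x) = (γ / n) * T := by
    rw [hA, Finset.sum_congr rfl fun i _ => hinner i, ← Finset.mul_sum]
  -- Step C: S = 2T by symmetry
  have hswap : ∑ i, ∑ j, c i j * (x j ^ 2 - x i * x j) = T := by
    rw [Finset.sum_comm]
    exact Finset.sum_congr rfl fun j _ => Finset.sum_congr rfl fun i _ => by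
      rw [hcsymm]; ring
  have hST : S = 2 * T := by
    have : S = T + ∑ i, ∑ j, c i j * (x j ^ 2 - x i * x j) := by
      rw [hS, hT, ← Finset.sum_add_distrib]
      refine Finset.sum_congr rfl fun i _ => ?_
      rw [← Finset.sum_add_distrib]
      exact Finset.sum_congr rfl fun j _ => by ring
    rw [this, hswap]; ring
  -- Step D: sum of squared differences
  have hsum2 : ∑ i, ∑ j, (x i - x j) ^ 2 = 2 * n * SQ := by
    have hrow : ∀ i : Fin n, ∑ j, (x i - x j) ^ 2 = n * x i ^ 2 + SQ := by
      intro i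
      calc ∑ j, (x i - x j) ^ 2
          = ∑ j, (x i ^ 2 - (2 * x i) * x j + x j ^ 2) :=
            Finset.sum_congr rfl fun j _ => by ring
        _ = ∑ j, (x i ^ 2 : ℝ) - (2 * x i) * (∑ j, x j) + ∑ j, x j ^ 2 := by
            rw [Finset.sum_add_distrib, Finset.sum_sub_distrib, ← Finset.mul_sum]
        _ = n * x i ^ 2 + SQ := by
            rw [hx, Finset.sum_const, Finset.card_univ, Fintype.card_fin, nsmul_eq_mul]
            rw [hSQ]; ring
    calc ∑ i, ∑ j, (x i - x j) ^ 2 = ∑ i : Fin n, ((n : ℝ) * x i ^ 2 + SQ) :=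
          Finset.sum_congr rfl fun i _ => hrow i
      _ = (n : ℝ) * SQ + (n : ℝ) * SQ := by
          rw [Finset.sum_add_distrib, ← Finset.mul_sum, Finset.sum_const, Finset.card_univ,
            Fintype.card_fin, nsmul_eq_mul, hSQ]
      _ = 2 * n * SQ := by ring
  -- Step E: bounds on S
  have hSlow : c₀ * (2 * n * SQ) ≤ S := by
    rw [← hsum2, Finset.mul_sum]
    refine Finset.sum_le_sum fun i _ => ?_
    rw [Finset.mul_sum]
    exact Finset.sum_le_sum fun j _ =>
      mul_le_mul_of_nonneg_right (hcos i j) (sq_nonneg _)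
  have hShigh : S ≤ 2 * n * SQ := by
    rw [← hsum2]
    refine Finset.sum_le_sum fun i _ => Finset.sum_le_sum fun j _ => ?_
    have h1 : c i j ≤ 1 := Real.cos_le_one _
    nlinarith [sq_nonneg (x i - x j)]
  have hγn : (0:ℝ) < γ / n := div_pos hγ hnR
  constructor
  · rw [hQ]
    have : γ * c₀ * SQ = (γ / n) * (c₀ * n * SQ) := by field_simp
    rw [this]
    apply mul_le_mul_of_nonneg_left _ hγn.le
    nlinarith [hSlow, hST]
  · rw [hQ]
    have : γ * SQ = (γ / n) * (n * SQ) := by field_simp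
    rw [this]
    apply mul_le_mul_of_nonneg_left _ hγn.le
    nlinarith [hShigh, hST]
end

section
/- Suppose a nonnegative differentiable function u : [0,∞) → ℝ satisfies u'(t) ≤ 2λ₂ u(t) + γ u(t)^{3/2} + 2εCN^{1/2} u(t)^{1/2}, with constants λ₂ < 0, γ, C, N > 0 and 0 < ε < |λ₂|²/(2CN^{1/2}γ). Set r = 2εCN^{1/2}/|λ₂| and R = |λ₂|/γ, so that r < R. If u(0) < r², then u(t) < r² for all t ≥ 0. -/
open Real

/-- Forward invariance of the small ball: if a nonnegative differentiable
function `u` (playing the role of `‖θ(t) − θ*‖²`) satisfies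
`u' ≤ 2lam2 u + γ u^{3/2} + 2εC√N u^{1/2}` with `lam2 < 0` and
`ε < |lam2|²/(2C√N γ)`, and `u(0) < r²` with `r = 2εC√N/|lam2|`, then
`u(t) < r²` for all `t ≥ 0`. -/
theorem stmt_6 (u : ℝ → ℝ) (lam2 γ C N ε : ℝ)
    (hlam : lam2 < 0) (hγ : 0 < γ) (hC : 0 < C) (hN : 0 < N)
    (hε : 0 < ε) (hεsmall : ε < |lam2| ^ 2 / (2 * C * Real.sqrt N * γ))
    (hdiff : Differentiable ℝ u)
    (hnonneg : ∀ t, 0 ≤ t → 0 ≤ u t)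
    (hineq : ∀ t, 0 ≤ t →
      deriv u t ≤ 2 * lam2 * u t + γ * (u t * Real.sqrt (u t))
        + 2 * ε * C * Real.sqrt N * Real.sqrt (u t))
    (r R : ℝ) (hr : r = 2 * ε * C * Real.sqrt N / |lam2|) (hR : R = |lam2| / γ)
    (h0 : u 0 < r ^ 2) :
    r < R ∧ ∀ t, 0 ≤ t → u t < r ^ 2 := by
  have hN' : 0 < Real.sqrt N := Real.sqrt_pos.mpr hN
  have habs : |lam2| = -lam2 := abs_of_neg hlam
  have hlabs : 0 < |lam2| := abs_pos.mpr (ne_of_lt hlam)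
  have hrpos : 0 < r := by rw [hr]; positivity
  have hkey : 2 * ε * C * Real.sqrt N * γ < |lam2| ^ 2 := by
    rw [lt_div_iff₀ (by positivity)] at hεsmall
    nlinarith
  have hrR : r < R := by
    rw [hr, hR, div_lt_div_iff₀ hlabs hγ]
    nlinarith [sq_abs lam2]
  refine ⟨hrR, ?_⟩
  by_contra h
  push_neg at h
  obtain ⟨t₀, ht₀, hut₀⟩ := h
  set S : Set ℝ := {t | 0 ≤ t ∧ r ^ 2 ≤ u t} with hS
  have hSne : S.Nonempty := ⟨t₀, ht₀, hut₀⟩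
  have hSbdd : BddBelow S := ⟨0, fun t ht => ht.1⟩
  have hScl : IsClosed S := by
    have : S = Set.Ici 0 ∩ u ⁻¹' Set.Ici (r ^ 2) := rfl
    rw [this]
    exact isClosed_Ici.inter (isClosed_Ici.preimage hdiff.continuous)
  have hsmem := hScl.csInf_mem hSne hSbdd
  set s := sInf S with hsdef
  obtain ⟨hs0, hsr⟩ := hsmem
  have hlt : ∀ t, 0 ≤ t → t < s → u t < r ^ 2 := by
    intro t ht hts
    by_contra hc
    push_neg at hc
    exact absurd (csInf_le hSbdd ⟨ht, hc⟩) (not_le.mpr hts)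
  have hspos : 0 < s := by
    rcases hs0.lt_or_eq with h' | h'
    · exact h'
    · exfalso; rw [← h'] at hsr; exact absurd hsr (not_le.mpr h0)
  -- u s = r ^ 2
  have hle : u s ≤ r ^ 2 := by
    have htend : Filter.Tendsto u (nhdsWithin s (Set.Iio s)) (nhds (u s)) :=
      (hdiff.continuous.continuousAt).continuousWithinAt.tendsto
    refine le_of_tendsto htend ?_
    filter_upwards [Ioo_mem_nhdsLT_of_mem (Set.mem_Ioc.mpr ⟨hspos, le_refl s⟩)] with t ht
    exact (hlt t ht.1.le ht.2).le
  have husr : u s = r ^ 2 := le_antisymm hle hsr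
  -- deriv u s ≥ 0 from left slopes
  have hderiv : Filter.Tendsto (slope u s) (nhdsWithin s {s}ᶜ) (nhds (deriv u s)) :=
    hasDerivAt_iff_tendsto_slope.mp (hdiff s).hasDerivAt
  have hderiv' : Filter.Tendsto (slope u s) (nhdsWithin s (Set.Iio s)) (nhds (deriv u s)) :=
    hderiv.mono_left (nhdsWithin_mono s (fun x hx => ne_of_lt hx))
  have hdnonneg : 0 ≤ deriv u s := by
    refine ge_of_tendsto hderiv' ?_
    filter_upwards [Ioo_mem_nhdsLT_of_mem (Set.mem_Ioc.mpr ⟨hspos, le_refl s⟩)] with t ht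
    have h1 : u t - u s < 0 := by
      rw [husr]; linarith [hlt t ht.1.le ht.2]
    have h2 : t - s < 0 := by linarith [ht.2]
    rw [slope_def_field, div_nonneg_iff]
    exact Or.inr ⟨h1.le, h2.le⟩
  -- deriv u s < 0 from the inequality
  have hsq : Real.sqrt (r ^ 2) = r := Real.sqrt_sq hrpos.le
  have hd := hineq s hs0
  rw [husr, hsq] at hd
  have hra : 2 * ε * C * Real.sqrt N = r * |lam2| := by
    rw [hr]; field_simp
  have hγr : r * γ < |lam2| := by
    rw [hR] at hrR; exact (lt_div_iff₀ hγ).mp hrR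
  nlinarith [mul_pos hrpos hrpos, sq_nonneg r]
end

section
/- Under the same hypotheses (u' ≤ 2λ₂ u + γ u^{3/2} + 2εCN^{1/2} u^{1/2}, λ₂ < 0, 0 < ε < |λ₂|²/(2CN^{1/2}γ), r = 2εCN^{1/2}/|λ₂|, R = |λ₂|/γ), if u(0) < R² then limsup_{t→∞} u(t) ≤ r². -/
/-!
Write `s = √u`. Substituting `λ₂ = -γR` and `2εCN^{1/2} = γrR`, the right-hand side becomes
`γ s (s - r)(s - R) - γ (R - r) s²`, which is at most `-γ (R - r) u` on the annulus `r² ≤ u ≤ R²`;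
the smallness of `ε` is exactly `r < R`. Fix a level `c ∈ (r², R²)`. Neither `c` nor
`M = max (u 0) c < R²` can be crossed upwards, so `u ≤ M`, and while `u > c` it decreases at the
uniform rate `γ (R - r) c`; hence it drops below `c` in finite time and stays there.
-/

open Real Filter Set Topology

theorem le_of_deriv_neg_at_level {u : ℝ → ℝ} (hu : Differentiable ℝ u) {a c : ℝ} (ha : u a ≤ c)
    (hneg : ∀ x, a ≤ x → u x = c → deriv u x < 0) {t : ℝ} (ht : a ≤ t) : u t ≤ c :=
  image_le_of_deriv_right_lt_deriv_boundary (B := fun _ => c) (B' := fun _ => 0)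
    hu.continuous.continuousOn (fun x _ => (hu x).hasDerivAt.hasDerivWithinAt) ha
    (fun x => hasDerivAt_const x c) (fun x hx => hneg x hx.1) ⟨ht, le_rfl⟩

theorem eventually_le_of_deriv_le_of_le_neg {u f : ℝ → ℝ} (hu : Differentiable ℝ u)
    {c M δ : ℝ} (hδ : 0 < δ) (hcM : c ≤ M) (hu0 : u 0 ≤ M)
    (hderiv : ∀ t, 0 ≤ t → deriv u t ≤ f (u t)) (hf : ∀ x ∈ Icc c M, f x ≤ -δ) :
    ∀ᶠ t in atTop, u t ≤ c := by
  have hdecr_at_level : ∀ x, 0 ≤ x → ∀ y ∈ Icc c M, u x = y → deriv u x < 0 :=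
    fun x hx y hy hxy => (hderiv x hx).trans_lt <| by rw [hxy]; linarith [hf y hy]
  have hbounded : ∀ t, 0 ≤ t → u t ≤ M := fun t ht =>
    le_of_deriv_neg_at_level hu hu0 (fun x hx => hdecr_at_level x hx M ⟨hcM, le_rfl⟩) ht
  obtain ⟨T, hT, huT⟩ : ∃ T, 0 ≤ T ∧ u T ≤ c := by
    by_contra! habove
    have hslope : ∀ x ∈ interior (Ici (0 : ℝ)), deriv u x ≤ -δ := fun x hx => by
      rw [interior_Ici] at hx
      exact (hderiv x hx.le).trans <|
        hf _ ⟨(habove x hx.le).le, hbounded x hx.le⟩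
    have ht : 0 ≤ (u 0 - c) / δ + 1 :=
      add_nonneg (div_nonneg (sub_nonneg.mpr (habove 0 le_rfl).le) hδ.le) zero_le_one
    have hdecay := (convex_Ici 0).image_sub_le_mul_sub_of_deriv_le hu.continuous.continuousOn
      hu.differentiableOn hslope 0 (mem_Ici.mpr le_rfl) _ ht ht
    have : δ * ((u 0 - c) / δ + 1) = u 0 - c + δ := by field_simp
    linarith [habove _ ht]
  exact eventually_atTop.mpr ⟨T, fun t ht =>
    le_of_deriv_neg_at_level hu huT (fun x hx => hdecr_at_level x (hT.trans hx) c ⟨le_rfl, hcM⟩) ht⟩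

theorem limsup_le_of_forall_eventually_le {α : Type*} {l : Filter α} {u : α → ℝ} {a b : ℝ}
    (hab : a < b) (hcob : IsCoboundedUnder (· ≤ ·) l u)
    (h : ∀ c ∈ Ioo a b, ∀ᶠ t in l, u t ≤ c) : limsup u l ≤ a :=
  ge_of_tendsto (tendsto_nhdsWithin_of_tendsto_nhds tendsto_id : Tendsto id (𝓝[>] a) (𝓝 a)) <|
    mem_of_superset (Ioo_mem_nhdsGT hab) fun c hc => limsup_le_of_le hcob (h c hc)

theorem rhs_le_of_mem_annulus {γ r R x : ℝ} (hγ : 0 ≤ γ) (hr : 0 ≤ r) (hR : 0 ≤ R)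
    (hrx : r ^ 2 ≤ x) (hxR : x ≤ R ^ 2) :
    -2 * γ * R * x + γ * (x * √x) + γ * r * R * √x ≤ -(γ * (R - r)) * x := by
  have hx : 0 ≤ x := (sq_nonneg r).trans hrx
  have hrs : r ≤ √x := (Real.le_sqrt hr hx).mpr hrx
  have hsR : √x ≤ R := (Real.sqrt_le_left hR).mpr hxR
  have hsq : √x ^ 2 = x := Real.sq_sqrt hx
  have hdip : γ * √x * ((√x - r) * (√x - R)) ≤ 0 :=
    mul_nonpos_of_nonneg_of_nonpos (by positivity)
      (mul_nonpos_of_nonneg_of_nonpos (sub_nonneg.mpr hrs) (sub_nonpos.mpr hsR))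
  linear_combination hdip + (γ * (R + r) - γ * √x) * hsq

/-- Convergence into the small ball: under the same differential inequality,
if `u(0) < R²` then `limsup_{t→∞} u(t) ≤ r²`. -/
theorem stmt_7 (u : ℝ → ℝ) (lam2 γ C N ε : ℝ)
    (hlam : lam2 < 0) (hγ : 0 < γ) (hC : 0 < C) (hN : 0 < N)
    (hε : 0 < ε) (hεsmall : ε < |lam2| ^ 2 / (2 * C * Real.sqrt N * γ))
    (hdiff : Differentiable ℝ u)
    (hnonneg : ∀ t, 0 ≤ t → 0 ≤ u t)
    (hineq : ∀ t, 0 ≤ t →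
      deriv u t ≤ 2 * lam2 * u t + γ * (u t * Real.sqrt (u t))
        + 2 * ε * C * Real.sqrt N * Real.sqrt (u t))
    (r R : ℝ) (hr : r = 2 * ε * C * Real.sqrt N / |lam2|) (hR : R = |lam2| / γ)
    (h0 : u 0 < R ^ 2) :
    limsup u atTop ≤ r ^ 2 := by
  have hL : 0 < |lam2| := abs_pos.mpr hlam.ne
  have hr0 : 0 < r := by rw [hr]; positivity
  have hlamR : lam2 = -(γ * R) := by rw [hR, mul_div_cancel₀ _ hγ.ne', abs_of_neg hlam, neg_neg]
  have hrR : 2 * ε * C * Real.sqrt N = γ * r * R := by rw [hr, hR]; field_simp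
  have hrltR : r < R := by
    rw [hr, hR, div_lt_div_iff₀ hL hγ]
    rw [lt_div_iff₀ (by positivity)] at hεsmall
    linarith
  have hcob : IsCoboundedUnder (· ≤ ·) atTop u :=
    .of_frequently_ge ((eventually_ge_atTop 0).mono hnonneg).frequently
  have hγRr : 0 < γ * (R - r) := mul_pos hγ (sub_pos.mpr hrltR)
  refine limsup_le_of_forall_eventually_le (pow_lt_pow_left₀ hrltR hr0.le two_ne_zero) hcob ?_
  rintro c ⟨hrc, hcR⟩
  refine eventually_le_of_deriv_le_of_le_neg hdiff (M := max (u 0) c) (δ := γ * (R - r) * c)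
    (f := fun x => -2 * γ * R * x + γ * (x * √x) + γ * r * R * √x)
    (mul_pos hγRr ((pow_pos hr0 2).trans hrc)) (le_max_right _ _) (le_max_left _ _)
    (fun t ht => (hineq t ht).trans_eq (by rw [hlamR, hrR]; ring)) ?_
  rintro x ⟨hcx, hxM⟩
  calc _ ≤ -(γ * (R - r)) * x :=
        rhs_le_of_mem_annulus hγ.le hr0.le (hr0.trans hrltR).le (hrc.le.trans hcx)
          (hxM.trans (max_le h0.le hcR.le))
    _ ≤ -(γ * (R - r) * c) := by nlinarith
end

section
/- In the Kuramoto model dθ_i/dt = ω_i − (γ/N) Σ_{j=1}^N sin(θ_i − θ_j), if two oscillators i, j satisfy |ω_i − ω_j| > 2γ, then they cannot be entrained: it is impossible that |θ_i(t) − θ_j(t)| remains bounded for all t ≥ 0. -/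
open Real

lemma kuramoto_aux (N : ℕ) (hN : 1 ≤ N) (γ : ℝ) (hγ : 0 < γ)
    (ω : Fin N → ℝ) (θ : Fin N → ℝ → ℝ)
    (hode : ∀ i t, HasDerivAt (θ i)
      (ω i - (γ / N) * ∑ j, Real.sin (θ i t - θ j t)) t)
    (i j : Fin N) (hfreq : ω i - ω j > 2 * γ)
    (B : ℝ) (hB : ∀ t, 0 ≤ t → |θ i t - θ j t| ≤ B) : False := by
  have hNpos : (0:ℝ) < N := by exact_mod_cast hN
  set c : ℝ := ω i - ω j - 2 * γ with hc
  have hcpos : 0 < c := by linarith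
  set g : ℝ → ℝ := fun t => θ i t - θ j t - c * t with hg
  have hderiv : ∀ t, HasDerivAt g
      ((ω i - (γ / N) * ∑ k, Real.sin (θ i t - θ k t)) -
       (ω j - (γ / N) * ∑ k, Real.sin (θ j t - θ k t)) - c) t := by
    intro t
    exact ((hode i t).sub (hode j t)).sub ((hasDerivAt_id t).const_mul c |>.congr_deriv (by ring))
  have hDnonneg : ∀ t, 0 ≤ (ω i - (γ / N) * ∑ k, Real.sin (θ i t - θ k t)) -
       (ω j - (γ / N) * ∑ k, Real.sin (θ j t - θ k t)) - c := by
    intro t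
    have hsum : |(∑ k, Real.sin (θ i t - θ k t)) - ∑ k, Real.sin (θ j t - θ k t)| ≤ 2 * N := by
      rw [← Finset.sum_sub_distrib]
      calc |∑ k, (Real.sin (θ i t - θ k t) - Real.sin (θ j t - θ k t))|
          ≤ ∑ k : Fin N, |Real.sin (θ i t - θ k t) - Real.sin (θ j t - θ k t)| :=
            Finset.abs_sum_le_sum_abs _ _
        _ ≤ ∑ k : Fin N, 2 := by
            apply Finset.sum_le_sum
            intro k _
            have h1 := Real.abs_sin_le_one (θ i t - θ k t)
            have h2 := Real.abs_sin_le_one (θ j t - θ k t)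
            have := abs_sub (Real.sin (θ i t - θ k t)) (Real.sin (θ j t - θ k t))
            calc |Real.sin (θ i t - θ k t) - Real.sin (θ j t - θ k t)|
                ≤ |Real.sin (θ i t - θ k t)| + |Real.sin (θ j t - θ k t)| := abs_sub _ _
              _ ≤ 2 := by linarith
        _ = 2 * N := by simp [mul_comm]
    have hb : (γ / N) * ((∑ k, Real.sin (θ i t - θ k t)) - ∑ k, Real.sin (θ j t - θ k t)) ≤ 2 * γ := by
      have h1 : (γ / N) * ((∑ k, Real.sin (θ i t - θ k t)) - ∑ k, Real.sin (θ j t - θ k t))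
          ≤ (γ / N) * (2 * N) := by
        apply mul_le_mul_of_nonneg_left _ (le_of_lt (div_pos hγ hNpos))
        exact le_trans (le_abs_self _) hsum
      have h2 : (γ / N) * (2 * N) = 2 * γ := by field_simp
      linarith
    have : (ω i - (γ / N) * ∑ k, Real.sin (θ i t - θ k t)) -
       (ω j - (γ / N) * ∑ k, Real.sin (θ j t - θ k t)) - c
       = 2 * γ - (γ / N) * ((∑ k, Real.sin (θ i t - θ k t)) - ∑ k, Real.sin (θ j t - θ k t)) := by
      rw [hc]; ring
    rw [this]; linarith
  have hmono : Monotone g := by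
    apply monotone_of_deriv_nonneg
    · intro t; exact (hderiv t).differentiableAt
    · intro t; rw [(hderiv t).deriv]; exact hDnonneg t
  set t₀ : ℝ := max 0 ((B + 1 - (θ i 0 - θ j 0)) / c) with ht₀
  have ht₀0 : 0 ≤ t₀ := le_max_left _ _
  have h1 : g 0 ≤ g t₀ := hmono ht₀0
  have h2 : c * t₀ ≥ B + 1 - (θ i 0 - θ j 0) := by
    have : (B + 1 - (θ i 0 - θ j 0)) / c ≤ t₀ := le_max_right _ _
    calc B + 1 - (θ i 0 - θ j 0) = c * ((B + 1 - (θ i 0 - θ j 0)) / c) := by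
          field_simp
      _ ≤ c * t₀ := by apply mul_le_mul_of_nonneg_left this (le_of_lt hcpos)
  have h3 : θ i t₀ - θ j t₀ ≥ B + 1 := by
    simp only [hg, mul_zero, sub_zero] at h1
    linarith
  have h4 := hB t₀ ht₀0
  have := le_abs_self (θ i t₀ - θ j t₀)
  linarith

/-- If two Kuramoto oscillators have natural frequencies differing by more
than `2γ`, they cannot be entrained: their phase difference is unbounded on
`[0,∞)`. -/
theorem stmt_10 (N : ℕ) (hN : 1 ≤ N) (γ : ℝ) (hγ : 0 < γ)
    (ω : Fin N → ℝ) (θ : Fin N → ℝ → ℝ)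
    (hode : ∀ i t, HasDerivAt (θ i)
      (ω i - (γ / N) * ∑ j, Real.sin (θ i t - θ j t)) t)
    (i j : Fin N) (hfreq : |ω i - ω j| > 2 * γ) :
    ¬ ∃ B : ℝ, ∀ t, 0 ≤ t → |θ i t - θ j t| ≤ B := by
  rintro ⟨B, hB⟩
  rcases lt_or_ge (ω i - ω j) 0 with hneg | hpos
  · have h' : ω j - ω i > 2 * γ := by
      have := abs_of_neg (show ω i - ω j < 0 from hneg) ▸ hfreq
      rw [abs_of_neg hneg] at hfreq; linarith
    exact kuramoto_aux N hN γ hγ ω θ hode j i h' B (fun t ht => by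
      rw [abs_sub_comm]; exact hB t ht)
  · have h' : ω i - ω j > 2 * γ := by rw [abs_of_nonneg hpos] at hfreq; exact hfreq
    exact kuramoto_aux N hN γ hγ ω θ hode i j h' B hB
end
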